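/- arXiv:1409.0934 — 6 statements merged into one kernel-verified Lean document; each statement's English description precedes it below -/
import Mathlib

section
/- Let r_1 ≥ r_2 ≥ ... ≥ r_m be real numbers sorted in descending order and let ν ∈ (0,1) with νm ∈ ℕ. Then min over ρ ∈ ℝ of ( -νρ + (1/m)·Σ_{i=1}^m max(ρ + r_i, 0) ) equals (ν)·(1/(νm))·Σ_{i=1}^{νm} r_i, i.e., ν times the average of the νm largest values. -/
/-!
Since `max x 0 ≥ x`, for every `ρ` and every set `s` of `k` indices,
`∑ᵢ max (ρ + rᵢ) 0 - kρ ≥ ∑_{i ∈ s} rᵢ`, with equality as soon as `-ρ` separates the values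
indexed by `s` from the others. For a descending sample and `s` the first `k` indices,
`ρ = -r_{k-1}` is such a threshold; dividing by `m` and using `ν = k / m` gives the claim.
-/

open Finset

section PositivePart

variable {ι : Type*} [Fintype ι]

theorem sum_le_sum_max_zero (s : Finset ι) (f : ι → ℝ) : ∑ i ∈ s, f i ≤ ∑ i, max (f i) 0 :=
  calc ∑ i ∈ s, f i ≤ ∑ i ∈ s, max (f i) 0 := sum_le_sum fun _ _ => le_max_left _ _
    _ ≤ ∑ i, max (f i) 0 :=
      sum_le_sum_of_subset_of_nonneg (subset_univ s) fun _ _ _ => le_max_right _ _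

theorem sum_max_zero_eq_sum_of_nonneg_of_nonpos {s : Finset ι} {f : ι → ℝ}
    (hs : ∀ i ∈ s, 0 ≤ f i) (hsc : ∀ i ∉ s, f i ≤ 0) : ∑ i, max (f i) 0 = ∑ i ∈ s, f i := by
  rw [← sum_subset (subset_univ s) fun i _ hi => max_eq_right (hsc i hi)]
  exact sum_congr rfl fun i hi => max_eq_left (hs i hi)

theorem isLeast_sum_max_add_sub_card_mul {s : Finset ι} {r : ι → ℝ} {ρ₀ : ℝ}
    (hs : ∀ i ∈ s, 0 ≤ ρ₀ + r i) (hsc : ∀ i ∉ s, ρ₀ + r i ≤ 0) :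
    IsLeast (Set.range fun ρ => ∑ i, max (ρ + r i) 0 - #s * ρ) (∑ i ∈ s, r i) := by
  have sum_add (ρ : ℝ) : ∑ i ∈ s, (ρ + r i) = #s * ρ + ∑ i ∈ s, r i := by
    simp [sum_add_distrib]
  refine ⟨⟨ρ₀, ?_⟩, ?_⟩
  · simp only [sum_max_zero_eq_sum_of_nonneg_of_nonpos hs hsc, sum_add]
    ring
  · rintro _ ⟨ρ, rfl⟩
    linarith [sum_le_sum_max_zero s fun i => ρ + r i, sum_add ρ]

end PositivePart

theorem Antitone.exists_separating_threshold {m k : ℕ} {r : Fin m → ℝ} (hr : Antitone r)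
    (hk : 0 < k) (hkm : k ≤ m) :
    ∃ ρ₀, (∀ i ∈ ({i | (i : ℕ) < k} : Finset (Fin m)), 0 ≤ ρ₀ + r i) ∧
      ∀ i ∉ ({i | (i : ℕ) < k} : Finset (Fin m)), ρ₀ + r i ≤ 0 := by
  let j : Fin m := ⟨k - 1, by omega⟩
  refine ⟨-r j, fun i hi => ?_, fun i hi => ?_⟩
  · simp only [mem_filter_univ] at hi
    have hij : i ≤ j := Fin.le_def.2 (show (i : ℕ) ≤ k - 1 by omega)
    linarith [hr hij]
  · simp only [mem_filter_univ] at hi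
    have hji : j ≤ i := Fin.le_def.2 (show k - 1 ≤ (i : ℕ) by omega)
    linarith [hr hji]

/-- Rockafellar–Uryasev representation of CVaR for a finite sample sorted in
descending order: the minimum over ρ of -νρ + (1/m)·Σ max(ρ+rᵢ,0) equals
ν times the average of the νm largest values. -/
theorem cvar_representation (m : ℕ) (hm : 0 < m) (r : Fin m → ℝ)
    (hsort : ∀ i j : Fin m, i ≤ j → r j ≤ r i)
    (ν : ℝ) (hν : ν ∈ Set.Ioo (0 : ℝ) 1)
    (k : ℕ) (hk : (k : ℝ) = ν * m) :
    IsLeast {x : ℝ | ∃ ρ : ℝ, x = -ν * ρ + (1 / m) * ∑ i, max (ρ + r i) 0}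
      (ν * ((1 / (k : ℝ)) * ∑ i : Fin m, if (i : ℕ) < k then r i else 0)) := by
  obtain ⟨hν0, hν1⟩ := hν
  have hmR : (0 : ℝ) < m := by exact_mod_cast hm
  have hk0 : 0 < k := by exact_mod_cast (show (0 : ℝ) < k by rw [hk]; positivity)
  have hkm : k ≤ m := by exact_mod_cast (show (k : ℝ) ≤ m by rw [hk]; nlinarith)
  have hν_eq : ν = k / m := by rw [hk]; field_simp
  obtain ⟨ρ₀, hs, hsc⟩ := Antitone.exists_separating_threshold (fun i j h => hsort i j h) hk0 hkm
  have hcard : (#{i : Fin m | (i : ℕ) < k} : ℝ) = k := by simp [Fin.card_filter_val_lt, hkm]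
  have hleast := (monotone_div_right_of_nonneg hmR.le).map_isLeast
    (isLeast_sum_max_add_sub_card_mul hs hsc)
  rw [← Set.range_comp, hcard] at hleast
  have objective (ρ : ℝ) : -ν * ρ + 1 / m * ∑ i, max (ρ + r i) 0 =
      (∑ i, max (ρ + r i) 0 - k * ρ) / m := by
    rw [hν_eq]; ring
  have value : ν * (1 / k * ∑ i : Fin m, if (i : ℕ) < k then r i else 0) =
      (∑ i ∈ ({i | (i : ℕ) < k} : Finset (Fin m)), r i) / m := by
    rw [← sum_filter, hν_eq]; field_simp
  simpa only [value, Set.range, Function.comp_apply, objective, eq_comm] using hleast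
end

section
/- Let r_1,...,r_m be real numbers, let 0 < μ < ν < 1 with νm, μm ∈ ℕ, and let r_{σ(1)} ≥ ... ≥ r_{σ(m)} be the descending sort. Define E_μ = { η ∈ {0,1}^m : Σ_i η_i ≥ m(1-μ) }. Then min over ρ ∈ ℝ and η ∈ E_μ of ( -(ν-μ)ρ + (1/m)·Σ_{i=1}^m η_i · max(ρ + r_i, 0) ) equals the trimmed sum (1/m)·Σ_{i=μm+1}^{νm} r_{σ(i)}. -/
/-- Sum of a nonneg function, decreasing along indices, over a set of at most `k`
indices is at most the sum over the first `k` indices. -/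
lemma aux_sum_le_top (m k : ℕ) (hk : k < m) (h : Fin m → ℝ) (hpos : ∀ i, 0 ≤ h i)
    (hmono : ∀ i j : Fin m, i ≤ j → h j ≤ h i) (A : Finset (Fin m)) (hA : A.card ≤ k) :
    ∑ i ∈ A, h i ≤ ∑ i ∈ Finset.Iio (⟨k, hk⟩ : Fin m), h i := by
  set K : Fin m := ⟨k, hk⟩ with hK
  set B := Finset.Iio K with hB
  have hBcard : B.card = k := by simp [hB, hK]
  have hcard : (A \ B).card ≤ (B \ A).card := by
    have h1 := Finset.card_inter_add_card_sdiff A B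
    have h2 := Finset.card_inter_add_card_sdiff B A
    have h3 : (A ∩ B).card = (B ∩ A).card := by rw [Finset.inter_comm]
    omega
  have key : ∑ i ∈ A \ B, h i ≤ ∑ i ∈ B \ A, h i := by
    have h1 : ∀ i ∈ A \ B, h i ≤ h K := by
      intro i hi
      rcases Finset.mem_sdiff.1 hi with ⟨-, hiB⟩
      exact hmono K i (not_lt.1 (by simpa [hB, Finset.mem_Iio] using hiB))
    have h2 : ∀ i ∈ B \ A, h K ≤ h i := by
      intro i hi
      rcases Finset.mem_sdiff.1 hi with ⟨hiB, -⟩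
      exact hmono i K (le_of_lt (by simpa [hB, Finset.mem_Iio] using hiB))
    calc ∑ i ∈ A \ B, h i ≤ (A \ B).card • h K := Finset.sum_le_card_nsmul _ _ _ h1
      _ ≤ (B \ A).card • h K := by
          simp only [nsmul_eq_mul]
          exact mul_le_mul_of_nonneg_right (by exact_mod_cast hcard) (hpos K)
      _ ≤ ∑ i ∈ B \ A, h i := Finset.card_nsmul_le_sum _ _ _ h2
  calc ∑ i ∈ A, h i = ∑ i ∈ A ∩ B, h i + ∑ i ∈ A \ B, h i :=
        (Finset.sum_inter_add_sum_sdiff A B h).symm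
    _ ≤ ∑ i ∈ A ∩ B, h i + ∑ i ∈ B \ A, h i := by linarith
    _ = ∑ i ∈ B ∩ A, h i + ∑ i ∈ B \ A, h i := by rw [Finset.inter_comm]
    _ = ∑ i ∈ B, h i := Finset.sum_inter_add_sum_sdiff B A h

/-- The robust (ν,μ)-SVM loss, minimized jointly over the threshold ρ and
binary outlier indicators η ∈ E_μ, equals the trimmed sum
(1/m)·Σ_{i=μm+1}^{νm} r_{σ(i)} of the descending-sorted values. -/
theorem robust_trimmed_cvar (m : ℕ) (hm : 0 < m) (r : Fin m → ℝ)
    (μ ν : ℝ) (hμ : 0 < μ) (hμν : μ < ν) (hν : ν < 1)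
    (kμ kν : ℕ) (hkμ : (kμ : ℝ) = μ * m) (hkν : (kν : ℝ) = ν * m)
    (σ : Equiv.Perm (Fin m)) (hσ : ∀ i j : Fin m, i ≤ j → r (σ j) ≤ r (σ i)) :
    IsLeast
      {x : ℝ | ∃ ρ : ℝ, ∃ η : Fin m → ℝ, (∀ i, η i = 0 ∨ η i = 1) ∧
        ((m : ℝ) * (1 - μ) ≤ ∑ i, η i) ∧
        x = -(ν - μ) * ρ + (1 / m) * ∑ i, η i * max (ρ + r i) 0}
      ((1 / m) * ∑ i : Fin m, if kμ ≤ (i : ℕ) ∧ (i : ℕ) < kν then r (σ i) else 0) := by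
  have hmR : (0:ℝ) < m := by exact_mod_cast hm
  have hkνm : kν < m := by
    have : (kν : ℝ) < m := by rw [hkν]; nlinarith
    exact_mod_cast this
  have hkk : kμ < kν := by
    have : (kμ : ℝ) < kν := by rw [hkμ, hkν]; nlinarith
    exact_mod_cast this
  have hkμm : kμ < m := lt_trans hkk hkνm
  set Kμ : Fin m := ⟨kμ, hkμm⟩ with hKμ
  set Kν : Fin m := ⟨kν, hkνm⟩ with hKν
  set C : ℝ := ∑ i : Fin m, if kμ ≤ (i : ℕ) ∧ (i : ℕ) < kν then r (σ i) else 0 with hC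
  have hfil2 : Finset.univ.filter (fun j : Fin m => kμ ≤ (j : ℕ) ∧ (j : ℕ) < kν)
      = Finset.Ico Kμ Kν := by
    ext j; simp [hKμ, hKν, Finset.mem_Ico, Fin.le_def, Fin.lt_def]
  have hIcoC : ∑ j ∈ Finset.Ico Kμ Kν, r (σ j) = C := by
    rw [hC, ← Finset.sum_filter, hfil2]
  have hIcoCard : (Finset.Ico Kμ Kν).card = kν - kμ := by simp [hKμ, hKν]
  have hcastdiff : ((kν - kμ : ℕ) : ℝ) = ν * m - μ * m := by
    rw [Nat.cast_sub hkk.le, hkμ, hkν]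
  constructor
  · -- membership
    refine ⟨-(r (σ Kν)), fun i => if ((σ.symm i : Fin m) : ℕ) < kμ then 0 else 1, ?_, ?_, ?_⟩
    · intro i; dsimp only; split <;> simp
    · have hsum : ∑ i : Fin m, (if ((σ.symm i : Fin m) : ℕ) < kμ then (0:ℝ) else 1)
          = ∑ j : Fin m, (if (j : ℕ) < kμ then (0:ℝ) else 1) := by
        rw [← Equiv.sum_comp σ (fun i => if ((σ.symm i : Fin m) : ℕ) < kμ then (0:ℝ) else 1)]
        simp
      rw [hsum]
      have : ∑ j : Fin m, (if (j : ℕ) < kμ then (0:ℝ) else 1) = ((m - kμ : ℕ) : ℝ) := by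
        rw [Finset.sum_ite, Finset.sum_const, Finset.sum_const, smul_zero, zero_add,
          nsmul_eq_mul, mul_one]
        have hfil : Finset.univ.filter (fun j : Fin m => ¬ (j : ℕ) < kμ) = Finset.Ici Kμ := by
          ext j; simp [hKμ, Finset.mem_Ici, Fin.le_def, not_lt]
        norm_cast
        rw [hfil]
        simp [hKμ]
      rw [this, Nat.cast_sub hkμm.le, hkμ]
      nlinarith
    · have hterm : ∀ j : Fin m,
          (if ((σ.symm (σ j) : Fin m) : ℕ) < kμ then (0:ℝ) else 1) * max (-(r (σ Kν)) + r (σ j)) 0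
          = (if kμ ≤ (j : ℕ) ∧ (j : ℕ) < kν then -(r (σ Kν)) + r (σ j) else 0) := by
        intro j
        rw [Equiv.symm_apply_apply]
        by_cases h1 : (j : ℕ) < kμ
        · rw [if_pos h1, zero_mul, if_neg (fun hc => absurd hc.1 (not_le.2 h1))]
        · by_cases h2 : (j : ℕ) < kν
          · have hle : r (σ Kν) ≤ r (σ j) := hσ j Kν (by simpa [Fin.le_def, hKν] using h2.le)
            rw [if_neg h1, one_mul, max_eq_left (by linarith), if_pos ⟨not_lt.1 h1, h2⟩]
          · have hle : r (σ j) ≤ r (σ Kν) := hσ Kν j (by simpa [Fin.le_def, hKν] using not_lt.1 h2)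
            rw [if_neg h1, one_mul, max_eq_right (by linarith), if_neg (by tauto)]
      have hbig : ∑ i : Fin m,
          (if ((σ.symm i : Fin m) : ℕ) < kμ then (0:ℝ) else 1) * max (-(r (σ Kν)) + r i) 0
          = (ν * m - μ * m) * (-(r (σ Kν))) + C := by
        rw [← Equiv.sum_comp σ
          (fun i => (if ((σ.symm i : Fin m) : ℕ) < kμ then (0:ℝ) else 1) * max (-(r (σ Kν)) + r i) 0)]
        rw [Finset.sum_congr rfl (fun j _ => hterm j)]
        have hsplit : ∀ j : Fin m,
            (if kμ ≤ (j : ℕ) ∧ (j : ℕ) < kν then -(r (σ Kν)) + r (σ j) else 0)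
            = (if kμ ≤ (j : ℕ) ∧ (j : ℕ) < kν then -(r (σ Kν)) else 0)
              + (if kμ ≤ (j : ℕ) ∧ (j : ℕ) < kν then r (σ j) else 0) := by
          intro j; split <;> ring
        rw [Finset.sum_congr rfl (fun j _ => hsplit j), Finset.sum_add_distrib]
        congr 1
        · rw [← Finset.sum_filter, hfil2, Finset.sum_const, hIcoCard, nsmul_eq_mul, hcastdiff]
      rw [hbig]
      field_simp
      ring
  · -- lower bound
    rintro x ⟨ρ, η, hη01, hηsum, rfl⟩
    set g : Fin m → ℝ := fun i => max (ρ + r i) 0 with hg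
    have hg0 : ∀ i, 0 ≤ g i := fun i => le_max_right _ _
    have hgmono : ∀ i j : Fin m, i ≤ j → g (σ j) ≤ g (σ i) := by
      intro i j hij
      exact max_le_max (by linarith [hσ i j hij]) le_rfl
    set S : Finset (Fin m) := Finset.univ.filter (fun i => η i = 1) with hS
    have hsum_eq : ∑ i, η i * g i = ∑ i ∈ S, g i := by
      rw [hS, Finset.sum_filter]
      apply Finset.sum_congr rfl
      intro i _
      rcases hη01 i with h | h <;> simp [h]
    have hSsum : ∑ i, η i = (S.card : ℝ) := by
      rw [hS]
      rw [Finset.sum_congr rfl (fun i _ => show η i = if η i = 1 then (1:ℝ) else 0 by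
        rcases hη01 i with h | h <;> simp [h])]
      simp [Finset.sum_boole]
    have hScard : m - kμ ≤ S.card := by
      have h1 : (m : ℝ) - kμ ≤ (S.card : ℝ) := by
        rw [← hSsum, hkμ]; nlinarith [hηsum]
      have h2 : ((m - kμ : ℕ) : ℝ) = (m : ℝ) - kμ := Nat.cast_sub hkμm.le
      exact_mod_cast h2 ▸ h1
    have hSle : S.card ≤ m := by
      simpa using Finset.card_le_univ S
    set A : Finset (Fin m) := Finset.univ \ S with hA
    have hAcard : A.card ≤ kμ := by
      rw [hA, Finset.card_sdiff_of_subset (Finset.subset_univ S)]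
      simp only [Finset.card_univ, Fintype.card_fin]
      omega
    set A' : Finset (Fin m) := A.image σ.symm with hA'
    have hA'card : A'.card ≤ kμ := by
      rw [hA', Finset.card_image_of_injective _ σ.symm.injective]; exact hAcard
    have hAeq : ∑ i ∈ A, g i = ∑ j ∈ A', g (σ j) := by
      rw [hA']
      rw [Finset.sum_image (fun a _ b _ h => σ.symm.injective h)]
      simp
    have hAle : ∑ j ∈ A', g (σ j) ≤ ∑ j ∈ Finset.Iio Kμ, g (σ j) :=
      aux_sum_le_top m kμ hkμm (fun j => g (σ j)) (fun j => hg0 _) hgmono A' hA'card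
    have hsplit1 : ∑ i ∈ S, g i = ∑ i, g i - ∑ i ∈ A, g i := by
      have := Finset.sum_sdiff (Finset.subset_univ S) (f := g)
      rw [← hA] at this
      linarith
    have hcomp : ∑ j : Fin m, g (σ j) = ∑ j ∈ Finset.Iio Kμ, g (σ j)
        + ∑ j ∈ Finset.Ici Kμ, g (σ j) := by
      rw [← Finset.sum_union]
      · congr 1
        ext j
        simp [Finset.mem_Iio, Finset.mem_Ici, lt_or_ge]
      · rw [Finset.disjoint_left]
        intro a ha hb
        simp only [Finset.mem_Iio] at ha
        simp only [Finset.mem_Ici] at hb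
        exact absurd hb (not_le.2 ha)
    have hIci_ge : ∑ j ∈ Finset.Ico Kμ Kν, g (σ j) ≤ ∑ j ∈ Finset.Ici Kμ, g (σ j) := by
      apply Finset.sum_le_sum_of_subset_of_nonneg
      · intro j hj
        simp only [Finset.mem_Ico] at hj
        simp only [Finset.mem_Ici]
        exact hj.1
      · intro j _ _; exact hg0 _
    have hIco_ge : ((kν - kμ : ℕ) : ℝ) * ρ + ∑ j ∈ Finset.Ico Kμ Kν, r (σ j)
        ≤ ∑ j ∈ Finset.Ico Kμ Kν, g (σ j) := by
      have h1 : ∀ j ∈ Finset.Ico Kμ Kν, ρ + r (σ j) ≤ g (σ j) := fun j _ => le_max_left _ _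
      have h2 := Finset.sum_le_sum h1
      rw [Finset.sum_add_distrib, Finset.sum_const, hIcoCard, nsmul_eq_mul] at h2
      exact h2
    have hperm : ∑ i : Fin m, g i = ∑ j : Fin m, g (σ j) := (Equiv.sum_comp σ g).symm
    have hchain : ((kν - kμ : ℕ) : ℝ) * ρ + C ≤ ∑ i, η i * g i := by
      rw [hsum_eq, hsplit1, hperm, hAeq, hcomp, ← hIcoC]
      linarith
    have hmul : (1 / (m:ℝ)) * (((kν - kμ : ℕ) : ℝ) * ρ + C) ≤ (1/(m:ℝ)) * ∑ i, η i * g i :=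
      mul_le_mul_of_nonneg_left hchain (by positivity)
    have hfin : (1 / (m:ℝ)) * (((kν - kμ : ℕ) : ℝ) * ρ + C)
        = (ν - μ) * ρ + (1/(m:ℝ)) * C := by
      rw [hcastdiff]; field_simp
    rw [hfin] at hmul
    linarith
end

section
/- Let D be a dataset of m labeled points with label ratio r = (1/m)·min(#positives, #negatives) > 0, and let 0 < μ < ν < 1 with νm, μm ∈ ℕ and μ < r/2. Suppose ν − μ ≤ 2(r − 2μ). Then for every contaminated dataset D' obtained from D by replacing at most μm points, and for every outlier indicator η ∈ E_μ = {η ∈ {0,1}^m : Σ η_i ≥ m(1−μ)}, both reduced convex hulls U_η^±[ν,μ;D'] are nonempty, where U_η^±[ν,μ;D'] = { Σ_{i: y_i' = ±1} γ_i k(·,x_i') : γ_i ≥ 0, Σ γ_i = 1, γ_i ≤ 2η_i/((ν−μ)m) }. -/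
/-- The reduced convex hull `U_η^s[ν,μ;D']` of the feature vectors `x i` of the
samples with label `s`, with coefficient caps `η i * cap` (`cap = 2/((ν-μ)m)`). -/
def redHull {H : Type*} [NormedAddCommGroup H] [InnerProductSpace ℝ H]
    (m : ℕ) (x : Fin m → H) (y : Fin m → ℝ) (η : Fin m → ℝ) (cap : ℝ) (s : ℝ) :
    Set H :=
  {f | ∃ γ : Fin m → ℝ, (∀ i, 0 ≤ γ i) ∧ (∀ i, γ i ≤ η i * cap) ∧
    (∀ i, y i ≠ s → γ i = 0) ∧ (∑ i, γ i = 1) ∧ f = ∑ i, γ i • x i}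

/-- If ν - μ ≤ 2(r - 2μ) and μ < r/2, then for every dataset contaminated in at
most μm points and every outlier indicator η ∈ E_μ, both reduced convex hulls
U_η^± are nonempty. -/
theorem reduced_hulls_nonempty
    {H : Type*} [NormedAddCommGroup H] [InnerProductSpace ℝ H]
    (m : ℕ) (hm : 0 < m) (x : Fin m → H) (y : Fin m → ℝ)
    (hy : ∀ i, y i = 1 ∨ y i = -1)
    (r : ℝ)
    (hr : r = (1 / m) * min (Nat.card {i : Fin m | y i = 1} : ℝ)
        (Nat.card {i : Fin m | y i = -1} : ℝ))
    (hrpos : 0 < r)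
    (μ ν : ℝ) (hμ0 : 0 < μ) (hμν : μ < ν) (hν1 : ν < 1)
    (kμ kν : ℕ) (hkμ : (kμ : ℝ) = μ * m) (hkν : (kν : ℝ) = ν * m)
    (hμr : μ < r / 2) (hkey : ν - μ ≤ 2 * (r - 2 * μ))
    (x' : Fin m → H) (y' : Fin m → ℝ) (hy' : ∀ i, y' i = 1 ∨ y' i = -1)
    (hcontam : (m : ℝ) - kμ ≤ (Nat.card {i : Fin m | x' i = x i ∧ y' i = y i} : ℝ))
    (η : Fin m → ℝ) (hη01 : ∀ i, η i = 0 ∨ η i = 1)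
    (hηsum : (m : ℝ) * (1 - μ) ≤ ∑ i, η i) :
    (redHull m x' y' η (2 / ((ν - μ) * m)) 1).Nonempty ∧
    (redHull m x' y' η (2 / ((ν - μ) * m)) (-1)).Nonempty := by
  classical
  have hmR : (0:ℝ) < m := by exact_mod_cast hm
  have hνμ : 0 < (ν - μ) * m := by nlinarith
  -- η counting
  set K : Finset (Fin m) := Finset.univ.filter (fun i => η i = 1) with hKdef
  have hsumη : ∑ i, η i = (K.card : ℝ) := by
    have : ∀ i, η i = if η i = 1 then (1:ℝ) else 0 := by
      intro i; rcases hη01 i with h | h <;> simp [h]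
    calc ∑ i, η i = ∑ i, if η i = 1 then (1:ℝ) else 0 := by
          exact Finset.sum_congr rfl fun i _ => this i
      _ = (K.card : ℝ) := by rw [Finset.sum_boole]
  have hKcard : (m : ℝ) - kμ ≤ (K.card : ℝ) := by
    rw [← hsumη]; nlinarith
  set G : Finset (Fin m) := Finset.univ.filter (fun i => x' i = x i ∧ y' i = y i) with hGdef
  have hGcard : (m : ℝ) - kμ ≤ (G.card : ℝ) := by
    have : Nat.card {i : Fin m | x' i = x i ∧ y' i = y i} = G.card := by
      rw [Nat.card_eq_fintype_card]; exact Fintype.card_subtype _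
    rwa [this] at hcontam
  -- main construction for a given label s
  have key : ∀ s : ℝ, r * m ≤ ((Finset.univ.filter (fun i => y i = s)).card : ℝ) →
      (redHull m x' y' η (2 / ((ν - μ) * m)) s).Nonempty := by
    intro s hA
    set A : Finset (Fin m) := Finset.univ.filter (fun i => y i = s) with hAdef
    set S : Finset (Fin m) := Finset.univ.filter (fun i => y' i = s ∧ η i = 1) with hSdef
    have hsub : A ∩ G ∩ K ⊆ S := by
      intro i hi
      simp only [hAdef, hGdef, hKdef, hSdef, Finset.mem_inter, Finset.mem_filter,
        Finset.mem_univ, true_and] at hi ⊢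
      exact ⟨hi.1.2.2.trans hi.1.1, hi.2⟩
    -- cardinality bound
    have h1 : (A ∩ G).card + (A ∪ G).card = A.card + G.card :=
      Finset.card_inter_add_card_union A G
    have h2 : ((A ∩ G) ∩ K).card + ((A ∩ G) ∪ K).card = (A ∩ G).card + K.card :=
      Finset.card_inter_add_card_union _ K
    have hu1 : (A ∪ G).card ≤ m := by
      simpa using Finset.card_le_card (Finset.subset_univ (A ∪ G))
    have hu2 : ((A ∩ G) ∪ K).card ≤ m := by
      simpa using Finset.card_le_card (Finset.subset_univ ((A ∩ G) ∪ K))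
    have hSc : (A ∩ G ∩ K).card ≤ S.card := Finset.card_le_card hsub
    have hSbound : r * m - 2 * kμ ≤ (S.card : ℝ) := by
      have c1 : ((A ∩ G).card : ℝ) + ((A ∪ G).card : ℝ) = A.card + G.card := by
        exact_mod_cast h1
      have c2 : (((A ∩ G) ∩ K).card : ℝ) + (((A ∩ G) ∪ K).card : ℝ)
          = ((A ∩ G).card : ℝ) + K.card := by exact_mod_cast h2
      have c3 : ((A ∪ G).card : ℝ) ≤ m := by exact_mod_cast hu1
      have c4 : (((A ∩ G) ∪ K).card : ℝ) ≤ m := by exact_mod_cast hu2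
      have c5 : (((A ∩ G) ∩ K).card : ℝ) ≤ S.card := by exact_mod_cast hSc
      linarith
    have hScap : (ν - μ) * m ≤ 2 * (S.card : ℝ) := by nlinarith
    have hSpos : 0 < (S.card : ℝ) := by nlinarith
    have hScard0 : (S.card : ℝ) ≠ 0 := ne_of_gt hSpos
    refine ⟨∑ i, (if i ∈ S then ((S.card : ℝ))⁻¹ else 0) • x' i,
      fun i => if i ∈ S then ((S.card : ℝ))⁻¹ else 0, ?_, ?_, ?_, ?_, rfl⟩
    · intro i; dsimp only
      by_cases hi : i ∈ S
      · simp only [hi, if_true]; positivity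
      · simp [hi]
    · intro i; dsimp only
      by_cases hi : i ∈ S
      · have hηi : η i = 1 := by
          simp only [hSdef, Finset.mem_filter] at hi; exact hi.2.2
        rw [if_pos hi, hηi, one_mul, inv_eq_one_div, div_le_div_iff₀ hSpos hνμ]
        linarith
      · rw [if_neg hi]
        have h0 : 0 ≤ η i := by rcases hη01 i with h | h <;> simp [h]
        exact mul_nonneg h0 (by positivity)
    · intro i hyi
      have : i ∉ S := by
        simp only [hSdef, Finset.mem_filter, Finset.mem_univ, true_and, not_and]
        intro h; exact absurd h hyi
      simp [this]
    · dsimp only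
      rw [Finset.sum_ite_mem, Finset.univ_inter, Finset.sum_const, nsmul_eq_mul,
        mul_inv_cancel₀ hScard0]
  -- translate Nat.card to Finset.card for the two labels
  have hcard : ∀ s : ℝ, (Nat.card {i : Fin m | y i = s} : ℝ)
      = ((Finset.univ.filter (fun i => y i = s)).card : ℝ) := by
    intro s
    have : Nat.card {i : Fin m | y i = s}
        = (Finset.univ.filter (fun i => y i = s)).card := by
      rw [Nat.card_eq_fintype_card]; exact Fintype.card_subtype _
    exact_mod_cast this
  have hrm : ∀ s : ℝ, (Nat.card {i : Fin m | y i = s} : ℝ)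
      = ((Finset.univ.filter (fun i => y i = s)).card : ℝ) := hcard
  set a := (Nat.card {i : Fin m | y i = 1} : ℝ) with hadef
  set b := (Nat.card {i : Fin m | y i = -1} : ℝ) with hbdef
  have hm0 : (m : ℝ) ≠ 0 := ne_of_gt hmR
  have hrm2 : r * m = min a b := by rw [hr]; field_simp
  have hmin1 : r * m ≤ ((Finset.univ.filter (fun i => y i = 1)).card : ℝ) := by
    rw [← hcard 1, ← hadef, hrm2]; exact min_le_left a b
  have hmin2 : r * m ≤ ((Finset.univ.filter (fun i => y i = -1)).card : ℝ) := by
    rw [← hcard (-1), ← hbdef, hrm2]; exact min_le_right a b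
  exact ⟨key 1 hmin1, key (-1) hmin2⟩
end

section
/- Let D be a dataset of m labeled points with label ratio r > 0, parameters 0 < μ < ν < 1 with νm, μm ∈ ℕ, μ < r/2, and ν − μ ≤ 2(r − 2μ). Then sup over D' ∈ D_{μm} of opt(ν,μ;D') is finite, where opt(ν,μ;D') = max over η ∈ E_μ of min over f ∈ V_η[ν,μ;D'] of ‖f‖_H², with V_η[ν,μ;D'] = U_η^+[ν,μ;D'] ⊖ U_η^-[ν,μ;D'] the Minkowski difference of the two reduced convex hulls. Moreover the supremum is bounded by max over f in conv{k(·,x_i): y_i=+1} ⊖ conv{k(·,x_i): y_i=−1} of ‖f‖_H², a quantity depending only on the uncontaminated data D. -/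
/-!
Fix a contaminated dataset `D'` and an admissible `η`. At most `μm` indices are contaminated and
at most `μm` have `η i = 0`, so each class of `D` keeps at least `(r - 2μ)m ≥ (ν - μ)m/2` indices
that are clean and active. Uniform weights on them respect the cap `2/((ν - μ)m)`, so their centre
of mass lies in the reduced hull of that class of `D'`; being an average of clean points, it also
lies in the convex hull of that class of `D`. Hence each inner minimum in `opt(ν,μ;D')` is at most
the largest `‖a - b‖²` over the clean hulls, which is finite since hulls of finite sets are bounded.
-/

open scoped ENNReal

/-- `opt(ν,μ;D') = max_{η ∈ E_μ} min_{f ∈ V_η[ν,μ;D']} ‖f‖²`, where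
`V_η = U_η⁺ ⊖ U_η⁻` is the Minkowski difference of the reduced convex hulls;
the infimum over an empty set is `⊤`. -/
noncomputable def svmOpt {H : Type*} [NormedAddCommGroup H] [InnerProductSpace ℝ H]
    (m : ℕ) (x : Fin m → H) (y : Fin m → ℝ) (ν μ : ℝ) : ℝ≥0∞ :=
  ⨆ η ∈ {η : Fin m → ℝ | (∀ i, η i = 0 ∨ η i = 1) ∧ (m : ℝ) * (1 - μ) ≤ ∑ i, η i},
    ⨅ f ∈ {f : H | ∃ a ∈ redHull m x y η (2 / ((ν - μ) * m)) 1,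
        ∃ b ∈ redHull m x y η (2 / ((ν - μ) * m)) (-1), f = a - b},
      (‖f‖₊ ^ 2 : ℝ≥0∞)

open Finset

section Counting

variable {ι : Type*} [Fintype ι]

theorem card_filter_le_card_filter_and_and_add (p q t : ι → Prop)
    [DecidablePred p] [DecidablePred q] [DecidablePred t] :
    #{i | p i} ≤ #{i | p i ∧ q i ∧ t i} + #{i | ¬ q i} + #{i | ¬ t i} := by
  classical
  calc #{i | p i}
      ≤ #(({i | p i ∧ q i ∧ t i} : Finset ι) ∪ ({i | ¬ q i} : Finset ι) ∪
          ({i | ¬ t i} : Finset ι)) :=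
        card_le_card fun i => by simp only [mem_union, mem_filter, mem_univ, true_and]; tauto
    _ ≤ _ := (card_union_le _ _).trans (Nat.add_le_add_right (card_union_le _ _) _)

theorem card_filter_not_le_of_le_card_filter (p : ι → Prop) [DecidablePred p] {k : ℝ}
    (h : (Fintype.card ι : ℝ) - k ≤ #{i | p i}) : (#{i | ¬ p i} : ℝ) ≤ k := by
  have hsplit : #{i | p i} + #{i | ¬ p i} = Fintype.card ι := card_filter_add_card_filter_not p
  have : ((#{i | p i} : ℕ) : ℝ) + #{i | ¬ p i} = Fintype.card ι := by exact_mod_cast hsplit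
  linarith

theorem sum_eq_card_filter_eq_one {η : ι → ℝ} (hη : ∀ i, η i = 0 ∨ η i = 1) :
    ∑ i, η i = #{i | η i = 1} := by
  rw [← sum_boole]
  exact sum_congr rfl fun i _ => by rcases hη i with h | h <;> simp [h]

end Counting

section ReducedHull

variable {H : Type*} [NormedAddCommGroup H] [InnerProductSpace ℝ H] {m : ℕ}

theorem centerMass_mem_redHull {x : Fin m → H} {y η : Fin m → ℝ} {cap s : ℝ}
    (hη : ∀ i, 0 ≤ η i) (hcap : 0 ≤ cap) {S : Finset (Fin m)}
    (hS : ∀ i ∈ S, η i = 1 ∧ y i = s) (hScap : (#S : ℝ)⁻¹ ≤ cap) (hSne : S.Nonempty) :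
    S.centerMass (fun _ => (1 : ℝ)) x ∈ redHull m x y η cap s := by
  have hcard : (#S : ℝ) ≠ 0 := by exact_mod_cast hSne.card_ne_zero
  refine ⟨fun i => if i ∈ S then (#S : ℝ)⁻¹ else 0, fun i => ?_, fun i => ?_, fun i hi => ?_,
    ?_, ?_⟩
  · dsimp only; split_ifs <;> positivity
  · dsimp only; split_ifs with hi
    · rwa [(hS i hi).1, one_mul]
    · exact mul_nonneg (hη i) hcap
  · dsimp only; rw [if_neg fun hiS => hi (hS i hiS).2]
  · rw [sum_ite_mem, univ_inter, sum_const, nsmul_eq_mul, mul_inv_cancel₀ hcard]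
  · simp only [centerMass, sum_const, one_smul, nsmul_eq_mul, mul_one, ite_smul, zero_smul,
      sum_ite_mem, univ_inter, smul_sum]

open scoped Classical in
theorem exists_mem_redHull_mem_convexHull {x x' : Fin m → H} {y y' η : Fin m → ℝ}
    (hη : ∀ i, η i = 0 ∨ η i = 1) {k cap : ℝ} (hcap : 0 ≤ cap) (s : ℝ)
    (hclean : (m : ℝ) - k ≤ #{i | x' i = x i ∧ y' i = y i})
    (hηsum : (m : ℝ) - k ≤ ∑ i, η i) (hclass : 1 ≤ cap * (#{i | y i = s} - 2 * k)) :
    ∃ a ∈ redHull m x' y' η cap s, a ∈ convexHull ℝ (x '' {i | y i = s}) := by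
  set S : Finset (Fin m) := {i | y i = s ∧ (x' i = x i ∧ y' i = y i) ∧ η i = 1}
  have hS : ∀ i ∈ S, y i = s ∧ (x' i = x i ∧ y' i = y i) ∧ η i = 1 := fun i hi =>
    (mem_filter.1 hi).2
  have hcount : (#{i | y i = s} : ℝ) - 2 * k ≤ #S := by
    have hsplit : (#{i | y i = s} : ℝ) ≤ #S + #{i | ¬ (x' i = x i ∧ y' i = y i)} +
        #{i | ¬ η i = 1} := by
      exact_mod_cast card_filter_le_card_filter_and_and_add _ _ _
    have hdirty := card_filter_not_le_of_le_card_filter (fun i => x' i = x i ∧ y' i = y i)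
      (by rwa [Fintype.card_fin])
    have hinactive := card_filter_not_le_of_le_card_filter (fun i => η i = 1)
      (by rwa [Fintype.card_fin, ← sum_eq_card_filter_eq_one hη])
    linarith
  have hScap : 1 ≤ cap * #S := hclass.trans (mul_le_mul_of_nonneg_left hcount hcap)
  have hSne : S.Nonempty := card_pos.1 <| Nat.pos_of_ne_zero fun h => by
    norm_num [h] at hScap
  refine ⟨_, centerMass_mem_redHull (fun i => (hη i).elim (·.ge) (·.symm ▸ zero_le_one)) hcap
      (fun i hi => ⟨(hS i hi).2.2, (hS i hi).2.1.2.trans (hS i hi).1⟩)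
      ((inv_le_iff_one_le_mul₀ (by exact_mod_cast hSne.card_pos)).2 hScap) hSne,
    S.centerMass_mem_convexHull (fun _ _ => zero_le_one) (by simpa using hSne)
      fun i hi => ⟨i, (hS i hi).1, (hS i hi).2.1.1.symm⟩⟩

theorem svmOpt_le_of_forall_exists {x : Fin m → H} {y : Fin m → ℝ} {ν μ : ℝ} {A B : Set H}
    (h : ∀ η : Fin m → ℝ, (∀ i, η i = 0 ∨ η i = 1) → (m : ℝ) * (1 - μ) ≤ ∑ i, η i →
      (∃ a ∈ redHull m x y η (2 / ((ν - μ) * m)) 1, a ∈ A) ∧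
        ∃ b ∈ redHull m x y η (2 / ((ν - μ) * m)) (-1), b ∈ B) :
    svmOpt m x y ν μ ≤ ⨆ a ∈ A, ⨆ b ∈ B, (‖a - b‖₊ ^ 2 : ℝ≥0∞) := by
  refine iSup₂_le fun η ⟨hη, hηsum⟩ => ?_
  obtain ⟨⟨a, ha, haA⟩, b, hb, hbB⟩ := h η hη hηsum
  exact (iInf₂_le (a - b) ⟨a, ha, b, hb, rfl⟩).trans
    (le_iSup₂_of_le a haA (le_iSup₂_of_le b hbB le_rfl))

end ReducedHull

theorem iSup_nnnorm_sub_sq_lt_top {E : Type*} [SeminormedAddCommGroup E] {A B : Set E}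
    (hA : Bornology.IsBounded A) (hB : Bornology.IsBounded B) :
    ⨆ a ∈ A, ⨆ b ∈ B, (‖a - b‖₊ ^ 2 : ℝ≥0∞) < ⊤ := by
  obtain ⟨C, hC⟩ := isBounded_iff_forall_norm_le.1 (hA.sub hB)
  refine lt_of_le_of_lt (iSup₂_le fun a ha => iSup₂_le fun b hb => ?_)
    (ENNReal.pow_lt_top (n := 2) (ENNReal.coe_lt_top (r := C.toNNReal)))
  gcongr
  exact_mod_cast NNReal.le_toNNReal_of_coe_le (hC _ (Set.sub_mem_sub ha hb))

theorem opt_uniformly_bounded_general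
    {H : Type*} [NormedAddCommGroup H] [InnerProductSpace ℝ H]
    (m : ℕ) (hm : 0 < m) (x : Fin m → H) (y : Fin m → ℝ)
    (r : ℝ)
    (hr : r = (1 / m) * min (Nat.card {i : Fin m | y i = 1} : ℝ)
        (Nat.card {i : Fin m | y i = -1} : ℝ))
    (μ ν : ℝ) (hμν : μ < ν)
    (kμ : ℕ) (hkμ : (kμ : ℝ) = μ * m)
    (hkey : ν - μ ≤ 2 * (r - 2 * μ)) :
    (⨆ x' : Fin m → H, ⨆ y' : Fin m → ℝ,
      ⨆ (_ : (∀ i, y' i = 1 ∨ y' i = -1) ∧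
        (m : ℝ) - kμ ≤ (Nat.card {i : Fin m | x' i = x i ∧ y' i = y i} : ℝ)),
        svmOpt m x' y' ν μ)
      ≤ (⨆ a ∈ convexHull ℝ (x '' {i : Fin m | y i = 1}),
          ⨆ b ∈ convexHull ℝ (x '' {i : Fin m | y i = -1}),
            (‖a - b‖₊ ^ 2 : ℝ≥0∞)) ∧
    (⨆ a ∈ convexHull ℝ (x '' {i : Fin m | y i = 1}),
        ⨆ b ∈ convexHull ℝ (x '' {i : Fin m | y i = -1}),
          (‖a - b‖₊ ^ 2 : ℝ≥0∞)) < ⊤ := by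
  classical
  have hm' : (0 : ℝ) < m := by exact_mod_cast hm
  have hdenom : 0 < (ν - μ) * m := mul_pos (sub_pos.2 hμν) hm'
  have hcap : 0 ≤ 2 / ((ν - μ) * m) := div_nonneg zero_le_two hdenom.le
  have hrm : r * m = min (#{i | y i = 1} : ℝ) #{i | y i = -1} := by
    simp only [hr, Nat.card_eq_card_toFinset, Set.toFinset_ofPred]
    field_simp
  have hclass : ∀ s, r * m ≤ #{i | y i = s} →
      1 ≤ 2 / ((ν - μ) * m) * (#{i | y i = s} - 2 * kμ) := by
    intro s hs
    rw [div_mul_eq_mul_div, one_le_div hdenom, hkμ]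
    linarith [mul_le_mul_of_nonneg_right hkey hm'.le]
  refine ⟨iSup_le fun x' => iSup_le fun y' => iSup_le fun ⟨_, hclean⟩ =>
      svmOpt_le_of_forall_exists fun η hη hηsum => ?_,
    iSup_nnnorm_sub_sq_lt_top (isBounded_convexHull.2 (Set.toFinite _).isBounded)
      (isBounded_convexHull.2 (Set.toFinite _).isBounded)⟩
  rw [Nat.card_eq_card_toFinset, Set.toFinset_ofPred] at hclean
  have hηsum' : (m : ℝ) - kμ ≤ ∑ i, η i := by rw [hkμ]; linarith
  exact ⟨exists_mem_redHull_mem_convexHull hη hcap 1 hclean hηsum'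
      (hclass 1 (hrm ▸ min_le_left _ _)),
    exists_mem_redHull_mem_convexHull hη hcap (-1) hclean hηsum'
      (hclass (-1) (hrm ▸ min_le_right _ _))⟩

/-- If μ < r/2 and ν - μ ≤ 2(r - 2μ), then `opt(ν,μ;D')` is uniformly bounded
over all datasets D' contaminated in at most μm points, by the maximum of ‖a-b‖²
over the Minkowski difference of the convex hulls of the uncontaminated classes,
which is finite. -/
theorem opt_uniformly_bounded
    {H : Type*} [NormedAddCommGroup H] [InnerProductSpace ℝ H]
    (m : ℕ) (hm : 0 < m) (x : Fin m → H) (y : Fin m → ℝ)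
    (hy : ∀ i, y i = 1 ∨ y i = -1)
    (r : ℝ)
    (hr : r = (1 / m) * min (Nat.card {i : Fin m | y i = 1} : ℝ)
        (Nat.card {i : Fin m | y i = -1} : ℝ))
    (hrpos : 0 < r)
    (μ ν : ℝ) (hμ0 : 0 < μ) (hμν : μ < ν) (hν1 : ν < 1)
    (kμ kν : ℕ) (hkμ : (kμ : ℝ) = μ * m) (hkν : (kν : ℝ) = ν * m)
    (hμr : μ < r / 2) (hkey : ν - μ ≤ 2 * (r - 2 * μ)) :
    (⨆ x' : Fin m → H, ⨆ y' : Fin m → ℝ,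
      ⨆ (_ : (∀ i, y' i = 1 ∨ y' i = -1) ∧
        (m : ℝ) - kμ ≤ (Nat.card {i : Fin m | x' i = x i ∧ y' i = y i} : ℝ)),
        svmOpt m x' y' ν μ)
      ≤ (⨆ a ∈ convexHull ℝ (x '' {i : Fin m | y i = 1}),
          ⨆ b ∈ convexHull ℝ (x '' {i : Fin m | y i = -1}),
            (‖a - b‖₊ ^ 2 : ℝ≥0∞)) ∧
    (⨆ a ∈ convexHull ℝ (x '' {i : Fin m | y i = 1}),
        ⨆ b ∈ convexHull ℝ (x '' {i : Fin m | y i = -1}),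
          (‖a - b‖₊ ^ 2 : ℝ≥0∞)) < ⊤ :=
  opt_uniformly_bounded_general m hm x y r hr μ ν hμν kμ hkμ hkey
end

section
/- Let D be a dataset of m labeled points with label ratio r > 0, parameters 0 < μ < ν < 1 with νm, μm ∈ ℕ and μ < r/2. If ν − μ > 2(r − 2μ), then there exists a contaminated dataset D' ∈ D_{μm} and an outlier indicator η ∈ E_μ such that the reduced convex hull U_η^-[ν,μ;D'] is empty; consequently sup over D' ∈ D_{μm} of opt(ν,μ;D') = ∞. -/
open scoped ENNReal

/-- If ν - μ > 2(r - 2μ), there is a dataset contaminated in at most μm points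
and an η ∈ E_μ whose negative reduced convex hull is empty; consequently the
supremum of `opt(ν,μ;D')` over contaminated datasets is infinite. -/
theorem opt_unbounded
    {H : Type*} [NormedAddCommGroup H] [InnerProductSpace ℝ H]
    (m : ℕ) (hm : 0 < m) (x : Fin m → H) (y : Fin m → ℝ)
    (hy : ∀ i, y i = 1 ∨ y i = -1)
    (hminority : Nat.card {i : Fin m | y i = -1} ≤ Nat.card {i : Fin m | y i = 1})
    (r : ℝ) (hr : r = (1 / m) * (Nat.card {i : Fin m | y i = -1} : ℝ))
    (hrpos : 0 < r)
    (μ ν : ℝ) (hμ0 : 0 < μ) (hμν : μ < ν) (hν1 : ν < 1)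
    (kμ kν : ℕ) (hkμ : (kμ : ℝ) = μ * m) (hkν : (kν : ℝ) = ν * m)
    (hμr : μ < r / 2) (hkey : ν - μ > 2 * (r - 2 * μ)) :
    (∃ (x' : Fin m → H) (y' : Fin m → ℝ) (η : Fin m → ℝ),
      (∀ i, y' i = 1 ∨ y' i = -1) ∧
      (m : ℝ) - kμ ≤ (Nat.card {i : Fin m | x' i = x i ∧ y' i = y i} : ℝ) ∧
      (∀ i, η i = 0 ∨ η i = 1) ∧ (m : ℝ) * (1 - μ) ≤ ∑ i, η i ∧
      redHull m x' y' η (2 / ((ν - μ) * m)) (-1) = ∅) ∧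
    (⨆ x' : Fin m → H, ⨆ y' : Fin m → ℝ,
      ⨆ (_ : (∀ i, y' i = 1 ∨ y' i = -1) ∧
        (m : ℝ) - kμ ≤ (Nat.card {i : Fin m | x' i = x i ∧ y' i = y i} : ℝ)),
        svmOpt m x' y' ν μ) = ⊤ := by
  have hmR : (0:ℝ) < m := by exact_mod_cast hm
  have hνμ : (0:ℝ) < ν - μ := by linarith
  classical
  set N : Finset (Fin m) := Finset.univ.filter (fun i => y i = -1) with hN
  have hcardN : (Nat.card {i : Fin m | y i = -1} : ℝ) = (N.card : ℝ) := by
    simp [hN, Nat.card_eq_fintype_card, Fintype.card_subtype]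
  have hn : (N.card : ℝ) = r * m := by
    rw [hcardN] at hr
    field_simp at hr
    linarith
  have h2k : 2 * kμ ≤ N.card := by
    have : (2 * kμ : ℝ) < (N.card : ℝ) := by
      push_cast; rw [hn, hkμ]; nlinarith
    exact_mod_cast this.le
  obtain ⟨A, hAsub, hAcard⟩ :=
    Finset.exists_subset_card_eq (show kμ ≤ N.card by omega)
  have hBle : kμ ≤ (N \ A).card := by
    rw [Finset.card_sdiff_of_subset hAsub, hAcard]; omega
  obtain ⟨B, hBsub, hBcard⟩ := Finset.exists_subset_card_eq hBle
  set y' : Fin m → ℝ := fun i => if i ∈ A then 1 else y i with hy'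
  set η : Fin m → ℝ := fun i => if i ∈ B then 0 else 1 with hη
  have hkμm : kμ ≤ m := by
    have : (kμ : ℝ) ≤ (m : ℝ) := by rw [hkμ]; nlinarith
    exact_mod_cast this
  have hy'val : ∀ i, y' i = 1 ∨ y' i = -1 := by
    intro i; by_cases h : i ∈ A <;> simp [hy', h, hy i]
  have hagree : (m : ℝ) - kμ ≤ (Nat.card {i : Fin m | x i = x i ∧ y' i = y i} : ℝ) := by
    have hsub : Aᶜ ⊆ Finset.univ.filter (fun i => x i = x i ∧ y' i = y i) := by
      intro i hi
      simp only [Finset.mem_compl] at hi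
      simp [hy', hi]
    have hcard := Finset.card_le_card hsub
    rw [Finset.card_compl, hAcard] at hcard
    have h1 : (Nat.card {i : Fin m | x i = x i ∧ y' i = y i} : ℝ)
        = ((Finset.univ.filter (fun i => x i = x i ∧ y' i = y i)).card : ℝ) := by
      simp [Nat.card_eq_fintype_card, Fintype.card_subtype]
    have h2 : ((Fintype.card (Fin m) - kμ : ℕ) : ℝ) = (m : ℝ) - kμ := by
      rw [Nat.cast_sub (by simpa using hkμm)]; simp
    rw [h1, ← h2]
    exact_mod_cast hcard
  have hηval : ∀ i, η i = 0 ∨ η i = 1 := by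
    intro i; by_cases h : i ∈ B <;> simp [hη, h]
  have hηsum : ∑ i, η i = (m : ℝ) - kμ := by
    have h1 : ∑ i, η i = (m : ℝ) - B.card := by
      simp only [hη]
      simp [Finset.sum_ite, Finset.filter_not, Finset.card_sdiff_of_subset (Finset.subset_univ B)]
      try rw [Nat.cast_sub (by simpa using Finset.card_le_univ B)]
      try simp
    rw [h1, hBcard]
  have hηsum' : (m : ℝ) * (1 - μ) ≤ ∑ i, η i := by
    rw [hηsum, hkμ]; ring_nf; linarith
  -- emptiness of the negative reduced hull
  have hempty : redHull m x y' η (2 / ((ν - μ) * m)) (-1) = ∅ := by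
    rw [Set.eq_empty_iff_forall_notMem]
    rintro f ⟨γ, h0, hcap, hzero, hsum, -⟩
    set C : Finset (Fin m) := (N \ A) \ B with hC
    have hCcard : (C.card : ℝ) = (r - 2 * μ) * m := by
      rw [hC, Finset.card_sdiff_of_subset hBsub, Finset.card_sdiff_of_subset hAsub, hAcard, hBcard]
      rw [Nat.cast_sub (by omega : kμ ≤ N.card - kμ),
        Nat.cast_sub (by omega : kμ ≤ N.card), hn, hkμ]
      ring
    have hsupp : ∀ i ∉ C, γ i = 0 := by
      intro i hi
      by_cases hB : i ∈ B
      · have := hcap i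
        rw [show η i = 0 by simp [hη, hB]] at this
        linarith [h0 i, this]
      · have hNA : i ∉ N \ A := by
          intro h; exact hi (by simp [hC, h, hB])
        apply hzero
        by_cases hA : i ∈ A
        · simp [hy', hA]; norm_num
        · have hNmem : i ∉ N := by
            intro h; exact hNA (Finset.mem_sdiff.mpr ⟨h, hA⟩)
          have : y i = 1 := by
            rcases hy i with h | h
            · exact h
            · exact absurd (by simp [hN, h]) hNmem
          simp [hy', hA, this]; norm_num
    have h1 : (1:ℝ) = ∑ i ∈ C, γ i := by
      rw [← hsum]
      exact (Finset.sum_subset (Finset.subset_univ C)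
        (fun i _ hiC => hsupp i hiC)).symm
    have hbound : ∑ i ∈ C, γ i ≤ (C.card : ℝ) * (2 / ((ν - μ) * m)) := by
      rw [← nsmul_eq_mul]
      refine Finset.sum_le_card_nsmul C γ _ (fun i hi => ?_)
      have hB : i ∉ B := by
        intro h; exact absurd hi (by simp [hC, h])
      have := hcap i
      rwa [show η i = 1 by simp [hη, hB], one_mul] at this
    have hlt : (C.card : ℝ) * (2 / ((ν - μ) * m)) < 1 := by
      rw [hCcard]
      have heq : (r - 2 * μ) * m * (2 / ((ν - μ) * m)) = 2 * (r - 2 * μ) / (ν - μ) := by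
        field_simp
      rw [heq, div_lt_one hνμ]
      linarith
    linarith
  refine ⟨⟨x, y', η, hy'val, hagree, hηval, hηsum', hempty⟩, ?_⟩
  -- the supremum is ⊤
  have hsvm : svmOpt m x y' ν μ = ⊤ := by
    rw [eq_top_iff, svmOpt]
    refine le_trans ?_ (le_iSup₂ η ⟨hηval, hηsum'⟩)
    have hS : {f : H | ∃ a ∈ redHull m x y' η (2 / ((ν - μ) * m)) 1,
        ∃ b ∈ redHull m x y' η (2 / ((ν - μ) * m)) (-1), f = a - b} = ∅ := by
      rw [Set.eq_empty_iff_forall_notMem]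
      rintro f ⟨a, -, b, hb, -⟩
      rw [hempty] at hb
      exact hb
    rw [hS]
    simp
  rw [eq_top_iff]
  refine le_trans ?_ (le_iSup _ x)
  refine le_trans ?_ (le_iSup _ y')
  refine le_trans ?_ (le_iSup _ ⟨hy'val, hagree⟩)
  exact hsvm.ge
end

section
/- For every rational μ ∈ (0, 1/4) and rational ν with μ < ν < 1, there exists m ∈ ℕ with μm ∈ ℕ and a dataset D of size m with label ratio r satisfying μ < r/2, together with a contaminated dataset D' sharing at least m − (μm + 1) points with D, such that opt(ν,μ;D') = ∞. -/
open scoped ENNReal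

lemma natCard_setOf_eq_filter (m : ℕ) (p : Fin m → Prop) [DecidablePred p] :
    Nat.card {i : Fin m | p i} = (Finset.univ.filter p).card := by
  simp [Nat.card_eq_fintype_card, Fintype.card_subtype]

lemma filter_lt_card (m c : ℕ) (h : c < m) :
    (Finset.univ.filter (fun i : Fin m => (i:ℕ) < c)).card = c := by
  have : Finset.univ.filter (fun i : Fin m => (i:ℕ) < c) = Finset.Iio (⟨c, h⟩ : Fin m) := by
    ext i; simp [Fin.lt_def]
  rw [this, Fin.card_Iio]

lemma filter_not_lt_card (m c : ℕ) (h : c < m) :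
    (Finset.univ.filter (fun i : Fin m => ¬ (i:ℕ) < c)).card = m - c := by
  have h2 := Finset.card_filter_add_card_filter_not (s := Finset.univ)
    (p := fun i : Fin m => (i:ℕ) < c)
  rw [Finset.card_univ, Fintype.card_fin, filter_lt_card m c h] at h2
  omega

/-- For any rationals 0 < μ < 1/4 and μ < ν < 1 there exist m with μm ∈ ℕ,
a dataset D of size m with label ratio r satisfying μ < r/2, and a dataset D'
sharing at least m - (μm + 1) points with D, such that `opt(ν,μ;D') = ∞`. -/
theorem breakdown_upper_bound
    {H : Type*} [NormedAddCommGroup H] [InnerProductSpace ℝ H]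
    (μ ν : ℚ) (hμ0 : 0 < μ) (hμ : μ < 1 / 4) (hμν : μ < ν) (hν1 : ν < 1) :
    ∃ (m k : ℕ) (x : Fin m → H) (y : Fin m → ℝ) (r : ℝ)
      (x' : Fin m → H) (y' : Fin m → ℝ),
      0 < m ∧ (k : ℝ) = (μ : ℝ) * m ∧
      (∀ i, y i = 1 ∨ y i = -1) ∧ (∀ i, y' i = 1 ∨ y' i = -1) ∧
      r = (1 / m) * min (Nat.card {i : Fin m | y i = 1} : ℝ)
          (Nat.card {i : Fin m | y i = -1} : ℝ) ∧
      (μ : ℝ) < r / 2 ∧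
      (m : ℝ) - ((k : ℝ) + 1) ≤ (Nat.card {i : Fin m | x' i = x i ∧ y' i = y i} : ℝ) ∧
      svmOpt m x' y' (ν : ℝ) (μ : ℝ) = ⊤ := by
  classical
  set q : ℕ := μ.den with hq
  set p : ℕ := μ.num.toNat with hp
  have hq0 : 0 < q := μ.den_pos
  have hp0 : 0 < p := by
    have := Rat.num_pos.mpr hμ0
    omega
  have hnum : (p : ℤ) = μ.num := Int.toNat_of_nonneg (Rat.num_pos.mpr hμ0).le
  have h4μ : (0:ℚ) < 1 - 4 * μ := by linarith
  obtain ⟨t, ht0, htQ⟩ : ∃ t : ℕ, 0 < t ∧ (2:ℚ) / (1 - 4 * μ) ≤ (t:ℚ) := by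
    refine ⟨(⌈(2:ℚ) / (1 - 4 * μ)⌉).toNat + 1, Nat.succ_pos _, ?_⟩
    have h1 : (2:ℚ) / (1 - 4 * μ) ≤ (⌈(2:ℚ) / (1 - 4 * μ)⌉ : ℚ) := Int.le_ceil _
    have h2 : (⌈(2:ℚ) / (1 - 4 * μ)⌉ : ℚ) ≤ ((⌈(2:ℚ) / (1 - 4 * μ)⌉).toNat : ℚ) := by
      exact_mod_cast Int.self_le_toNat _
    push_cast
    linarith
  set m : ℕ := q * t with hm
  set k : ℕ := p * t with hk
  have hm0 : 0 < m := Nat.mul_pos hq0 ht0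
  -- (p : ℚ) = μ * q
  have hden : ((q:ℚ)) ≠ 0 := by exact_mod_cast hq0.ne'
  have hpq : (p : ℚ) = μ * q := by
    have h2 : ((p:ℚ)) = ((μ.num : ℤ) : ℚ) := by exact_mod_cast hnum
    have h3 : μ * ((μ.den:ℚ)) = ((μ.num:ℚ)/(μ.den:ℚ)) * μ.den := by
      rw [Rat.num_div_den]
    rw [div_mul_cancel₀ _ hden] at h3
    rw [h2, ← h3]
  -- (k : ℚ) = μ * m
  have hkQ : (k : ℚ) = μ * m := by
    have hkc : (k : ℚ) = (p:ℚ) * (t:ℚ) := by rw [hk]; push_cast; ring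
    have hmc : (m : ℚ) = (q:ℚ) * (t:ℚ) := by rw [hm]; push_cast; ring
    rw [hkc, hmc, hpq]; ring
  have hkR : (k : ℝ) = (μ:ℝ) * m := by
    have := congrArg (fun a : ℚ => (a : ℝ)) hkQ
    push_cast at this
    exact this
  -- m is big
  have hmbig : (2:ℚ) ≤ (m:ℚ) * (1 - 4 * μ) := by
    have hmt : (t : ℚ) ≤ (m : ℚ) := by
      exact_mod_cast Nat.le_mul_of_pos_left t hq0
    have := (div_le_iff₀ h4μ).mp (le_trans htQ hmt)
    linarith
  have hm4k : 4 * k + 2 ≤ m := by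
    have : (4 * (k:ℚ) + 2) ≤ (m:ℚ) := by rw [hkQ]; nlinarith
    exact_mod_cast this
  have h2k1 : 2 * k + 1 < m := by omega
  have hkm : k < m := by omega
  refine ⟨m, k, (fun _ => 0), (fun i => if (i:ℕ) < 2*k+1 then (-1:ℝ) else 1), _,
      (fun _ => 0), (fun i => if (i:ℕ) < k then (-1:ℝ) else 1), hm0, hkR, ?_, ?_, rfl, ?_, ?_, ?_⟩
  · intro i; by_cases h : (i:ℕ) < 2*k+1 <;> simp [h]
  · intro i; by_cases h : (i:ℕ) < k <;> simp [h]
  -- μ < r / 2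
  · have hpos : {i : Fin m | (if (i:ℕ) < 2*k+1 then (-1:ℝ) else 1) = 1}
        = {i : Fin m | ¬ (i:ℕ) < 2*k+1} := by
      ext i
      by_cases h : (i:ℕ) < 2*k+1
      · rw [Set.mem_setOf_eq, Set.mem_setOf_eq, if_pos h]; norm_num; omega
      · rw [Set.mem_setOf_eq, Set.mem_setOf_eq, if_neg h]; norm_num; omega
    have hneg : {i : Fin m | (if (i:ℕ) < 2*k+1 then (-1:ℝ) else 1) = -1}
        = {i : Fin m | (i:ℕ) < 2*k+1} := by
      ext i
      by_cases h : (i:ℕ) < 2*k+1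
      · rw [Set.mem_setOf_eq, Set.mem_setOf_eq, if_pos h]; norm_num; omega
      · rw [Set.mem_setOf_eq, Set.mem_setOf_eq, if_neg h]; norm_num; omega
    rw [hpos, hneg, natCard_setOf_eq_filter, natCard_setOf_eq_filter,
      filter_lt_card m _ h2k1, filter_not_lt_card m _ h2k1]
    have hmin : min (((m - (2*k+1) : ℕ)):ℝ) ((2*k+1 : ℕ):ℝ) = ((2*k+1 : ℕ):ℝ) := by
      apply min_eq_right
      have : (2*k+1 : ℕ) ≤ m - (2*k+1) := by omega
      exact_mod_cast this
    rw [hmin]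
    have hm0R : (0:ℝ) < m := by exact_mod_cast hm0
    have hre : (1/(m:ℝ)) * ((2*k+1 : ℕ):ℝ) / 2 = ((2*k+1 : ℕ):ℝ) / ((m:ℝ) * 2) := by
      rw [one_div, inv_mul_eq_div, div_div]
    rw [hre, lt_div_iff₀ (by positivity)]
    push_cast
    linarith [hkR]
  -- shared points
  · have hset : {i : Fin m | (0:H) = 0 ∧ (if (i:ℕ) < k then (-1:ℝ) else 1)
        = (if (i:ℕ) < 2*k+1 then (-1:ℝ) else 1)}
        = {i : Fin m | ¬ ((k:ℕ) ≤ (i:ℕ) ∧ (i:ℕ) < 2*k+1)} := by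
      ext i
      simp only [Set.mem_setOf_eq, true_and]
      by_cases h1 : (i:ℕ) < k
      · have h2 : (i:ℕ) < 2*k+1 := by omega
        rw [if_pos h1, if_pos h2]; norm_num; omega
      · by_cases h2 : (i:ℕ) < 2*k+1
        · rw [if_neg h1, if_pos h2]; norm_num; omega
        · rw [if_neg h1, if_neg h2]; norm_num; omega
    rw [hset, natCard_setOf_eq_filter]
    have hIco : Finset.univ.filter (fun i : Fin m => (k:ℕ) ≤ (i:ℕ) ∧ (i:ℕ) < 2*k+1)
        = Finset.Ico (⟨k, hkm⟩ : Fin m) (⟨2*k+1, h2k1⟩ : Fin m) := by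
      ext i; simp [Fin.lt_def, Fin.le_def]
    have hcard : (Finset.univ.filter
        (fun i : Fin m => ¬ ((k:ℕ) ≤ (i:ℕ) ∧ (i:ℕ) < 2*k+1))).card = m - (k+1) := by
      have h2 := Finset.card_filter_add_card_filter_not (s := Finset.univ)
        (p := fun i : Fin m => (k:ℕ) ≤ (i:ℕ) ∧ (i:ℕ) < 2*k+1)
      rw [Finset.card_univ, Fintype.card_fin, hIco, Fin.card_Ico] at h2
      simp only [Fin.val_mk] at h2
      omega
    rw [hcard]
    have hc : ((m - (k+1) : ℕ):ℝ) = (m:ℝ) - ((k:ℝ) + 1) := by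
      have hle : k + 1 ≤ m := by omega
      push_cast [Nat.cast_sub hle]
      ring
    rw [hc]
  -- svmOpt = ⊤
  · set η : Fin m → ℝ := fun i => if (i:ℕ) < k then 0 else 1 with hη
    have hηmem : η ∈ {η : Fin m → ℝ | (∀ i, η i = 0 ∨ η i = 1) ∧
        (m : ℝ) * (1 - (μ:ℝ)) ≤ ∑ i, η i} := by
      constructor
      · intro i; by_cases h : (i:ℕ) < k <;> simp [hη, h]
      · have hsum : ∑ i, η i = ((m - k : ℕ):ℝ) := by
          have h1 : ∑ i, η i = ∑ i : Fin m, (if ¬ ((i:ℕ) < k) then (1:ℝ) else 0) := by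
            apply Finset.sum_congr rfl
            intro i _
            by_cases h : (i:ℕ) < k <;> simp [hη, h]
          rw [h1, Finset.sum_boole, filter_not_lt_card m k hkm]
        rw [hsum]
        have hc : ((m - k : ℕ):ℝ) = (m:ℝ) - k := by
          push_cast [Nat.cast_sub hkm.le]; ring
        have he : (m:ℝ) * (1 - (μ:ℝ)) = (m:ℝ) - (μ:ℝ) * m := by ring
        rw [hsum] at *
        rw [hc, hkR, he]
    have hempty : {f : H | ∃ a ∈ redHull m (fun _ => (0:H))
          (fun i => if (i:ℕ) < k then (-1:ℝ) else 1) η (2 / (((ν:ℝ) - (μ:ℝ)) * m)) 1,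
        ∃ b ∈ redHull m (fun _ => (0:H))
          (fun i => if (i:ℕ) < k then (-1:ℝ) else 1) η (2 / (((ν:ℝ) - (μ:ℝ)) * m)) (-1),
        f = a - b} = ∅ := by
      ext f
      simp only [Set.mem_empty_iff_false, iff_false, Set.mem_setOf_eq]
      rintro ⟨a, -, b, ⟨γ, hγ0, hγcap, hγs, hγsum, -⟩, -⟩
      have hz : ∀ i, γ i = 0 := by
        intro i
        by_cases h : (i:ℕ) < k
        · have hcap := hγcap i
          rw [hη] at hcap
          simp only [h, if_pos, zero_mul] at hcap
          linarith [hγ0 i]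
        · apply hγs
          show (if (i:ℕ) < k then (-1:ℝ) else 1) ≠ -1
          rw [if_neg h]
          norm_num
      rw [Finset.sum_congr rfl (fun i _ => hz i)] at hγsum
      simp at hγsum
    rw [svmOpt]
    apply le_antisymm le_top
    refine le_trans ?_ (le_iSup₂ (f := fun η _ =>
      ⨅ f ∈ {f : H | ∃ a ∈ redHull m (fun _ => (0:H))
          (fun i => if (i:ℕ) < k then (-1:ℝ) else 1) η (2 / (((ν:ℝ) - (μ:ℝ)) * m)) 1,
        ∃ b ∈ redHull m (fun _ => (0:H))
          (fun i => if (i:ℕ) < k then (-1:ℝ) else 1) η (2 / (((ν:ℝ) - (μ:ℝ)) * m)) (-1),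
        f = a - b}, (‖f‖₊ ^ 2 : ℝ≥0∞)) η hηmem)
    rw [hempty]
    simp
end
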